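/- arXiv:1409.3533 — 2 statements merged into one kernel-verified Lean document; each statement's English description precedes it below -/
import Mathlib

section
/- In an OK-program's call graph, the set of action nodes reachable from the entry point through the session interface after activating role r is contained in the set of actions permitted to r by the policy. -/
/-!
Activating `r` confines the session to the vertices "within `r`": session and other vertices,
classes of role `r`, and actions permitted to `r`. The OK-conditions say exactly that every edge
leaving such a vertex lands in another one (the permitted actions being sinks), so the set is
closed under reachability and the only reachable actions are permitted ones.
-/

/-- Vertex classification for the session/role/resource/other partition. -/
inductive GKind (Role : Type) : Type
  | session
  | roleClass (r : Role)
  | resourceAction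
  | other

theorem Relation.ReflTransGen.of_closed {α : Type*} {r : α → α → Prop} {P : α → Prop}
    (hP : ∀ ⦃a b⦄, r a b → P a → P b) {a b : α} (hab : ReflTransGen r a b) (ha : P a) : P b := by
  induction hab with
  | refl => exact ha
  | tail _ hbc ih => exact hP hbc ih

section WithinRole

variable {V Role : Type} (kind : V → GKind Role) (allow : Role → V → Prop) (r : Role)

def WithinRole (v : V) : Prop :=
  match kind v with
  | GKind.session => True
  | GKind.roleClass r' => r' = r
  | GKind.resourceAction => allow r v
  | GKind.other => True

variable {kind allow r}

theorem WithinRole.of_edge {E : V → V → Prop}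
    (hSession : ∀ u v, E u v → kind u = GKind.session →
      kind v = GKind.session ∨ kind v = GKind.roleClass r ∨ kind v = GKind.other)
    (hRoleAct : ∀ u v (r' : Role), E u v → kind u = GKind.roleClass r' →
      kind v = GKind.resourceAction → allow r' v)
    (hRoleRole : ∀ u v (r1 r2 : Role), E u v → kind u = GKind.roleClass r1 →
      kind v = GKind.roleClass r2 → r1 = r2)
    (hOther : ∀ u v, E u v → kind u = GKind.other → kind v = GKind.other)
    (hSink : ∀ u v, kind u = GKind.resourceAction → ¬ E u v)
    ⦃u v : V⦄ (huv : E u v) (hu : WithinRole kind allow r u) : WithinRole kind allow r v := by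
  unfold WithinRole at hu ⊢
  cases hku : kind u with
  | session =>
    rcases hSession u v huv hku with hkv | hkv | hkv <;> simp only [hkv]
  | roleClass r' =>
    rw [hku] at hu
    subst hu
    cases hkv : kind v with
    | session | other => trivial
    | roleClass r'' => exact (hRoleRole u v r' r'' huv hku hkv).symm
    | resourceAction => exact hRoleAct u v r' huv hku hkv
  | resourceAction => exact absurd huv (hSink u v hku)
  | other => simp only [hOther u v huv hku]

end WithinRole

theorem ok_program_reachable_actions_permitted_general
    {V Role : Type}
    (kind : V → GKind Role)
    (E : V → V → Prop)
    (allow : Role → V → Prop)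
    (r : Role)
    (e : V) (hentry : kind e = GKind.session)
    -- from session, only session, the activated role's classes, and other are reachable
    (hSession : ∀ u v, E u v → kind u = GKind.session →
      kind v = GKind.session ∨ kind v = GKind.roleClass r ∨ kind v = GKind.other)
    -- role classes call actions only when permitted
    (hRoleAct : ∀ u v (r' : Role), E u v → kind u = GKind.roleClass r' →
      kind v = GKind.resourceAction → allow r' v)
    -- role classes never call role classes of another role
    (hRoleRole : ∀ u v (r1 r2 : Role), E u v → kind u = GKind.roleClass r1 →
      kind v = GKind.roleClass r2 → r1 = r2)
    -- other classes have no edges to role, action, or session classes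
    (hOther : ∀ u v, E u v → kind u = GKind.other → kind v = GKind.other)
    -- action vertices are sinks for the analysis
    (hSink : ∀ u v, kind u = GKind.resourceAction → ¬ E u v) :
    ∀ a : V, Relation.ReflTransGen E e a → kind a = GKind.resourceAction →
      allow r a := by
  intro a hea hka
  have hentry_within : WithinRole kind allow r e := by
    simp only [WithinRole, hentry]
  have ha : WithinRole kind allow r a :=
    hea.of_closed
      (WithinRole.of_edge hSession hRoleAct hRoleRole hOther hSink) hentry_within
  simpa only [WithinRole, hka] using ha

/-- In an OK-program's call graph, with role `r` activated, the set of action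
nodes reachable from the session entry point is contained in the set of actions
permitted to `r` by the policy. -/
theorem ok_program_reachable_actions_permitted
    {V Role : Type} [Fintype Role]
    (kind : V → GKind Role)
    (E : V → V → Prop)
    (allow : Role → V → Prop)
    (r : Role)
    (e : V) (hentry : kind e = GKind.session)
    -- from session, only session, the activated role's classes, and other are reachable
    (hSession : ∀ u v, E u v → kind u = GKind.session →
      kind v = GKind.session ∨ kind v = GKind.roleClass r ∨ kind v = GKind.other)
    -- role classes call actions only when permitted
    (hRoleAct : ∀ u v (r' : Role), E u v → kind u = GKind.roleClass r' →
      kind v = GKind.resourceAction → allow r' v)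
    -- role classes never call role classes of another role
    (hRoleRole : ∀ u v (r1 r2 : Role), E u v → kind u = GKind.roleClass r1 →
      kind v = GKind.roleClass r2 → r1 = r2)
    -- other classes have no edges to role, action, or session classes
    (hOther : ∀ u v, E u v → kind u = GKind.other → kind v = GKind.other)
    -- action vertices are sinks for the analysis
    (hSink : ∀ u v, kind u = GKind.resourceAction → ¬ E u v) :
    ∀ a : V, Relation.ReflTransGen E e a → kind a = GKind.resourceAction →
      allow r a :=
  ok_program_reachable_actions_permitted_general kind E allow r e hentry hSession hRoleAct hRoleRole
    hOther hSink
end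

section
/- Role isolation: in an OK-program, there is no call path from a role class of role r1 to a role class of a different role r2 that does not pass through a session class; combined with the OK-condition that resource and other classes never call role classes, any path between role classes of distinct roles must contain a session-class vertex. -/
/- Only a session class may call a role class of a role other than its own, so along a
session-free path the property "is a role class of `r`" propagates backwards from the last
vertex to the first one. -/

inductive IKind (Role : Type) : Type
  | session
  | roleClass (r : Role)
  | resource
  | other

theorem IKind.eq_roleClass_of_edge {V Role : Type} {kind : V → IKind Role} {E : V → V → Prop}
    (hRoleRole : ∀ u v (r r' : Role), E u v → kind u = IKind.roleClass r →
      kind v = IKind.roleClass r' → r = r')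
    (hResRole : ∀ u v (r : Role), E u v → kind u = IKind.resource →
      kind v ≠ IKind.roleClass r)
    (hOtherRole : ∀ u v (r : Role), E u v → kind u = IKind.other →
      kind v ≠ IKind.roleClass r)
    {u v : V} {r : Role} (huv : E u v) (hu : kind u ≠ IKind.session)
    (hv : kind v = IKind.roleClass r) : kind u = IKind.roleClass r := by
  cases hk : kind u with
  | session => exact absurd hk hu
  | roleClass r' => rw [hRoleRole u v r' r huv hk hv]
  | resource => exact absurd hv (hResRole u v r huv hk)
  | other => exact absurd hv (hOtherRole u v r huv hk)

/-- Role isolation: in an OK-program's call graph — where role classes have no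
edges to other roles' classes, and resource and other classes have no edges to
any role class (only session classes may call role classes of arbitrary roles)
— every path from a role class of `r1` to a role class of `r2` with `r1 ≠ r2`
contains a session-class vertex. -/
theorem ok_program_role_isolation
    {V Role : Type}
    (kind : V → IKind Role)
    (E : V → V → Prop)
    -- role classes never call role classes of a different role
    (hRoleRole : ∀ u v (r r' : Role), E u v → kind u = IKind.roleClass r →
      kind v = IKind.roleClass r' → r = r')
    -- resource classes have no edges to role classes
    (hResRole : ∀ u v (r : Role), E u v → kind u = IKind.resource →
      kind v ≠ IKind.roleClass r)
    -- other classes have no edges to role classes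
    (hOtherRole : ∀ u v (r : Role), E u v → kind u = IKind.other →
      kind v ≠ IKind.roleClass r) :
    ∀ (r1 r2 : Role), r1 ≠ r2 →
      ∀ (p : List V), p.Chain' E →
        (∀ u, p.head? = some u → kind u = IKind.roleClass r1) →
        (∀ v, p.getLast? = some v → kind v = IKind.roleClass r2) →
        p ≠ [] →
        ∃ v ∈ p, kind v = IKind.session := by
  intro r1 r2 hne p hchain hhead hlast hp
  by_contra! hsession
  have hchain' : p.IsChain (fun u v => E u v ∧ kind u ≠ IKind.session) :=
    hchain.imp_of_mem_imp fun u _ hu _ huv => ⟨huv, hsession u hu⟩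
  have hrole : ∀ u ∈ p, kind u = IKind.roleClass r2 :=
    hchain'.backwards_induction (kind · = IKind.roleClass r2) p
      (fun _ _ huv => IKind.eq_roleClass_of_edge hRoleRole hResRole hOtherRole huv.1 huv.2)
      (fun _ => hlast _ (List.getLast?_eq_some_getLast hp))
  have hfirst := hhead _ (List.head?_eq_some_head hp)
  rw [hrole _ (List.head_mem hp), IKind.roleClass.injEq] at hfirst
  exact hne hfirst.symm
end
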